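/- Let R be a commutative Noetherian ring, n a natural number, and M an R-module. Assume that Ass(M)_{≥n} is a nonempty finite set, that Ass(M/K)_{≥n} is a finite set for every finitely generated submodule K of M, and that M_𝔭 is a finitely generated R_𝔭-module for every 𝔭 ∈ Ass(M)_{≥n}. Then there exists a finitely generated submodule N of M such that ⋂_{𝔭 ∈ Ass(M)_{≥n}} 𝔭 is strictly contained in ⋂_{𝔭 ∈ Ass(M/N)_{≥n}} 𝔭 (where the intersection over the empty set is R). -/

import Mathlib

open CategoryTheory Opposite

noncomputable section

universe u

namespace Paper

variable (A : Type u) [CommRing A]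

/-- The `i`-th local cohomology of the module `M` with support in the ideal `I`,
as an object of `ModuleCat A`. -/
def LC (I : Ideal A) (i : ℕ) (M : Type u) [AddCommGroup M] [Module A M] :
    ModuleCat.{u} A :=
  (localCohomology I i).obj (ModuleCat.of A M)

/-- The Ext module `Ext_A^i(N, P)`. -/
def extM (N P : Type u) [AddCommGroup N] [Module A N] [AddCommGroup P] [Module A P]
    (i : ℕ) : Type u :=
  ((Ext A (ModuleCat.{u} A) i).obj (op (ModuleCat.of A N))).obj (ModuleCat.of A P)

/-- `grade(I, M) = inf { i | Ext_A^i(A/I, M) ≠ 0 }`, an element of `ℕ∞`. -/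
def gradeE (I : Ideal A) (M : Type u) [AddCommGroup M] [Module A M] : ℕ∞ :=
  sInf {x : ℕ∞ | ∃ i : ℕ, x = i ∧ Nontrivial (extM A (A ⧸ I) M i)}

/-- The depth of a module over a local ring: `depth M = grade(𝔪, M)`. -/
def depthL (B : Type u) [CommRing B] [IsLocalRing B] (N : Type u)
    [AddCommGroup N] [Module B N] : ℕ∞ :=
  gradeE B (IsLocalRing.maximalIdeal B) N

/-- The height of an ideal: the infimum of the heights of the primes containing it
(`⊤` if there are none). -/
def heightI (I : Ideal A) : ℕ∞ :=
  ⨅ (𝔭 : PrimeSpectrum A) (_ : I ≤ 𝔭.asIdeal), Order.height 𝔭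

/-- The Krull dimension of the support of a module. -/
def dimS (M : Type u) [AddCommGroup M] [Module A M] : WithBot ℕ∞ :=
  Order.krullDim (Module.support A M)

/-- `dim R/𝔭` for a prime `𝔭`. -/
def dimQ (𝔭 : PrimeSpectrum A) : WithBot ℕ∞ :=
  ringKrullDim (A ⧸ 𝔭.asIdeal)

/-- The localization of `A` at a prime `𝔭`. -/
def Loc (𝔭 : PrimeSpectrum A) : Type u := Localization.AtPrime 𝔭.asIdeal

instance (𝔭 : PrimeSpectrum A) : CommRing (Loc A 𝔭) :=
  inferInstanceAs (CommRing (Localization.AtPrime 𝔭.asIdeal))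

instance (𝔭 : PrimeSpectrum A) : IsLocalRing (Loc A 𝔭) :=
  inferInstanceAs (IsLocalRing (Localization.AtPrime 𝔭.asIdeal))

instance (𝔭 : PrimeSpectrum A) : Algebra A (Loc A 𝔭) :=
  inferInstanceAs (Algebra A (Localization.AtPrime 𝔭.asIdeal))

/-- The localization of a module `M` at a prime `𝔭`. -/
def locM (𝔭 : PrimeSpectrum A) (M : Type u) [AddCommGroup M] [Module A M] : Type u :=
  LocalizedModule 𝔭.asIdeal.primeCompl M

instance (𝔭 : PrimeSpectrum A) (M : Type u) [AddCommGroup M] [Module A M] :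
    AddCommGroup (locM A 𝔭 M) :=
  inferInstanceAs (AddCommGroup (LocalizedModule 𝔭.asIdeal.primeCompl M))

instance (𝔭 : PrimeSpectrum A) (M : Type u) [AddCommGroup M] [Module A M] :
    Module (Loc A 𝔭) (locM A 𝔭 M) :=
  inferInstanceAs (Module (Localization.AtPrime 𝔭.asIdeal)
    (LocalizedModule 𝔭.asIdeal.primeCompl M))

/-- The extension `I·A_𝔭` of an ideal `I` to the localization at a prime `𝔭`. -/
def locI (I : Ideal A) (𝔭 : PrimeSpectrum A) : Ideal (Loc A 𝔭) :=
  I.map (algebraMap A (Loc A 𝔭))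

/-- The Cohen-Macaulay defect `cmd R = sup { ht 𝔭 - depth R_𝔭 | 𝔭 ∈ Spec R }`. -/
def cmd : ℕ∞ :=
  ⨆ 𝔭 : PrimeSpectrum A, (Order.height 𝔭 - depthL (Loc A 𝔭) (Loc A 𝔭))

/-- `f_𝔞^𝔟(M) = inf { i | 𝔟^t · H_𝔞^i(M) ≠ 0 for all t }`. -/
def fb (a b : Ideal A) (M : Type u) [AddCommGroup M] [Module A M] : ℕ∞ :=
  sInf {x : ℕ∞ | ∃ i : ℕ, x = i ∧
    ∀ t : ℕ, b ^ t • (⊤ : Submodule A ↥(LC A a i M)) ≠ ⊥}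

/-- `f_𝔞^𝔟(M)_n = inf { i | dim Supp (𝔟^t · H_𝔞^i(M)) ≥ n for all t }`. -/
def fbn (a b : Ideal A) (n : ℕ) (M : Type u) [AddCommGroup M] [Module A M] : ℕ∞ :=
  sInf {x : ℕ∞ | ∃ i : ℕ, x = i ∧
    ∀ t : ℕ, (n : WithBot ℕ∞) ≤ dimS A ↥(b ^ t • (⊤ : Submodule A ↥(LC A a i M)))}

/-- `λ_𝔞^𝔟(M) = inf { depth M_𝔭 + ht (𝔞+𝔭)/𝔭 | 𝔭 ∈ Spec R \ V(𝔟) }`. -/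
def lam (a b : Ideal A) (M : Type u) [AddCommGroup M] [Module A M] : ℕ∞ :=
  sInf {x : ℕ∞ | ∃ 𝔭 : PrimeSpectrum A, ¬ b ≤ 𝔭.asIdeal ∧
    x = depthL (Loc A 𝔭) (locM A 𝔭 M) +
      heightI (A ⧸ 𝔭.asIdeal) ((a ⊔ 𝔭.asIdeal).map (Ideal.Quotient.mk 𝔭.asIdeal))}

/-- `λ_𝔞^𝔟(M)_n = inf { λ_{𝔞R_𝔭}^{𝔟R_𝔭}(M_𝔭) | 𝔭 ∈ Spec R, dim R/𝔭 ≥ n }`. -/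
def lamn (a b : Ideal A) (n : ℕ) (M : Type u) [AddCommGroup M] [Module A M] : ℕ∞ :=
  sInf {x : ℕ∞ | ∃ 𝔭 : PrimeSpectrum A, (n : WithBot ℕ∞) ≤ dimQ A 𝔭 ∧
    x = lam (Loc A 𝔭) (locI A a 𝔭) (locI A b 𝔭) (locM A 𝔭 M)}

/-- `f_𝔞^𝔟(M)^n = inf { f_{𝔞R_𝔭}^{𝔟R_𝔭}(M_𝔭) | 𝔭 ∈ Spec R, dim R/𝔭 ≥ n }`. -/
def fup (a b : Ideal A) (n : ℕ) (M : Type u) [AddCommGroup M] [Module A M] : ℕ∞ :=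
  sInf {x : ℕ∞ | ∃ 𝔭 : PrimeSpectrum A, (n : WithBot ℕ∞) ≤ dimQ A 𝔭 ∧
    x = fb (Loc A 𝔭) (locI A a 𝔭) (locI A b 𝔭) (locM A 𝔭 M)}

/-- `M` is in dimension `< n` if it has a finitely generated submodule `N` with
`dim Supp (M/N) < n`. -/
def InDim (n : ℕ) (M : Type u) [AddCommGroup M] [Module A M] : Prop :=
  ∃ N : Submodule A M, N.FG ∧ dimS A (M ⧸ N) < (n : WithBot ℕ∞)

/-- The difference of two extended natural numbers, as an element of `EReal`
(with `a - ∞ = -∞` for every `a`, and `∞ - b = ∞` for `b ≠ ∞`). -/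
def enatSub (a b : ℕ∞) : EReal :=
  if b = ⊤ then ⊥
  else if a = ⊤ then ⊤
  else ((WithTop.untopD 0 a : ℕ) : EReal) - ((WithTop.untopD 0 b : ℕ) : EReal)

/-- The canonical embedding of `ℕ∞` into `EReal`. -/
def enatCast (a : ℕ∞) : EReal :=
  if a = ⊤ then ⊤ else ((WithTop.untopD 0 a : ℕ) : EReal)

/-- The canonical embedding of `ℕ ∪ {-∞}` into `EReal`. -/
def botNatCast (t : WithBot ℕ) : EReal :=
  t.recBotCoe ⊥ (fun n => (n : EReal))

/-- The large restricted flat dimension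
`Rfd_R M = sup { depth R_𝔭 - depth M_𝔭 | 𝔭 ∈ Spec R }`, as an element of `EReal`. -/
def rfd (M : Type u) [AddCommGroup M] [Module A M] : EReal :=
  ⨆ 𝔭 : PrimeSpectrum A,
    enatSub (depthL (Loc A 𝔭) (Loc A 𝔭)) (depthL (Loc A 𝔭) (locM A 𝔭 M))

/-- `U_t(M) = { 𝔭 ∈ Spec R | Rfd_{R_𝔭} M_𝔭 ≤ t }`. -/
def Ut (t : EReal) (M : Type u) [AddCommGroup M] [Module A M] :
    Set (PrimeSpectrum A) :=
  {𝔭 : PrimeSpectrum A | rfd (Loc A 𝔭) (locM A 𝔭 M) ≤ t}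

/-- `c_t(M) = ⋂ { 𝔭 | 𝔭 ∈ Spec R \ U_t(M) }` (the unit ideal if this set is empty). -/
def ct (t : EReal) (M : Type u) [AddCommGroup M] [Module A M] : Ideal A :=
  ⨅ (𝔭 : PrimeSpectrum A) (_ : 𝔭 ∉ Ut A t M), 𝔭.asIdeal

/-- The `n`-th grade of `𝔞` on `M`:
`grade(𝔞,M)_{≥n} = inf { grade(𝔞R_𝔭, M_𝔭) | 𝔭 ∈ Supp(M/𝔞M), dim R/𝔭 ≥ n }`. -/
def gradeEn (a : Ideal A) (n : ℕ) (M : Type u) [AddCommGroup M] [Module A M] : ℕ∞ :=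
  sInf {x : ℕ∞ | ∃ 𝔭 : PrimeSpectrum A,
    𝔭 ∈ Module.support A (M ⧸ (a • (⊤ : Submodule A M))) ∧
    (n : WithBot ℕ∞) ≤ dimQ A 𝔭 ∧
    x = gradeE (Loc A 𝔭) (locI A a 𝔭) (locM A 𝔭 M)}

/-- `Ass(M)_{≥ n}`, the set of associated primes `𝔭` of `M` with `dim R/𝔭 ≥ n`. -/
def assn (n : ℕ) (M : Type u) [AddCommGroup M] [Module A M] : Set (PrimeSpectrum A) :=
  {𝔭 : PrimeSpectrum A | 𝔭.asIdeal ∈ associatedPrimes A M ∧ (n : WithBot ℕ∞) ≤ dimQ A 𝔭}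

/-- `γ_𝔞^𝔟(M)_n = inf { depth M_𝔭 + ht (𝔞+𝔭)/𝔭 | 𝔭 ∈ Spec R \ V(𝔟), dim R/(𝔞+𝔭) ≥ n }`. -/
def gam (a b : Ideal A) (n : ℕ) (M : Type u) [AddCommGroup M] [Module A M] : ℕ∞ :=
  sInf {x : ℕ∞ | ∃ 𝔭 : PrimeSpectrum A, ¬ b ≤ 𝔭.asIdeal ∧
    (n : WithBot ℕ∞) ≤ ringKrullDim (A ⧸ (a ⊔ 𝔭.asIdeal)) ∧
    x = depthL (Loc A 𝔭) (locM A 𝔭 M) +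
      heightI (A ⧸ 𝔭.asIdeal) ((a ⊔ 𝔭.asIdeal).map (Ideal.Quotient.mk 𝔭.asIdeal))}

end Paper

end

universe u



section Helpers4p3

variable {R : Type u} [CommRing R] {M : Type u} [AddCommGroup M] [Module R M]

/-- Associated primes lie in the support. -/
lemma mem_support_of_associated {𝔮 : PrimeSpectrum R}
    (h : 𝔮.asIdeal ∈ associatedPrimes R M) : 𝔮 ∈ Module.support R M := by
  obtain ⟨hprime, x, hx⟩ := h
  exact Module.mem_support_iff_exists_annihilator.mpr ⟨x, by rw [hx, ← Submodule.bot_colon']; exact Ideal.le_radical⟩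

/-- The support is stable under specialization. -/
lemma mem_support_of_le {𝔮 𝔭 : PrimeSpectrum R} (hle : 𝔮.asIdeal ≤ 𝔭.asIdeal)
    (h : 𝔮 ∈ Module.support R M) : 𝔭 ∈ Module.support R M := by
  rw [Module.mem_support_iff_exists_annihilator] at h ⊢
  obtain ⟨m, hm⟩ := h
  exact ⟨m, hm.trans hle⟩

/-- Over a Noetherian ring, any prime in the support contains an associated prime. -/
lemma exists_associated_le [IsNoetherianRing R] (𝔮 : PrimeSpectrum R)
    (h : 𝔮 ∈ Module.support R M) :
    ∃ 𝔭 : PrimeSpectrum R, 𝔭.asIdeal ∈ associatedPrimes R M ∧ 𝔭.asIdeal ≤ 𝔮.asIdeal := by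
  classical
  set S := 𝔮.asIdeal.primeCompl with hS
  let Rq := Localization S
  have hNoeth : IsNoetherianRing Rq := IsLocalization.isNoetherianRing S Rq inferInstance
  have hnt : Nontrivial (LocalizedModule S M) := h
  obtain ⟨P, hP⟩ := associatedPrimes.nonempty Rq (LocalizedModule S M)
  obtain ⟨hPprime, ξ, hξ⟩ := isAssociatedPrime_iff.mp hP
  obtain ⟨m, s, rfl⟩ := LocalizedModule.induction_on
    (β := fun ξ => ∃ m s, LocalizedModule.mk m s = ξ) (fun m s => ⟨m, s, rfl⟩) ξ
  set 𝔭 : Ideal R := P.comap (algebraMap R Rq) with h𝔭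
  have h𝔭prime : 𝔭.IsPrime := Ideal.IsPrime.comap _
  have h𝔭le : 𝔭 ≤ 𝔮.asIdeal := by
    intro r hr
    by_contra hrq
    have hunit : IsUnit (algebraMap R Rq r) := IsLocalization.map_units Rq (⟨r, hrq⟩ : S)
    exact hPprime.ne_top (Ideal.eq_top_of_isUnit_mem _ hr hunit)
  have hmem : ∀ r : R, r ∈ 𝔭 ↔ ∃ v : S, ((v : R) * r) • m = 0 := by
    intro r
    have : r ∈ 𝔭 ↔ (algebraMap R Rq r) • (LocalizedModule.mk m s : LocalizedModule S M) = 0 := by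
      rw [h𝔭, Ideal.mem_comap, hξ, Submodule.mem_colon_singleton, Submodule.mem_bot]
    rw [this, algebraMap_smul, LocalizedModule.smul'_mk]
    constructor
    · intro h0
      rw [← LocalizedModule.zero_mk (S := S) (M := M) s, LocalizedModule.mk_eq] at h0
      obtain ⟨u, hu⟩ := h0
      refine ⟨u * s, ?_⟩
      have hu' : ((u : R) * ((s : R) * r)) • m = 0 := by
        simpa only [Submonoid.smul_def, smul_smul, smul_zero] using hu
      calc ((↑(u * s) : R) * r) • m = ((u : R) * ((s : R) * r)) • m := by
            congr 1; rw [Submonoid.coe_mul]; ring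
        _ = 0 := hu'
    · rintro ⟨v, hv⟩
      rw [← LocalizedModule.zero_mk (S := S) (M := M) s, LocalizedModule.mk_eq]
      refine ⟨v, ?_⟩
      simp only [Submonoid.smul_def, smul_smul, smul_zero]
      calc ((v : R) * ((s : R) * r)) • m = (s : R) • (((v : R) * r) • m) := by
            rw [smul_smul]; congr 1; ring
        _ = 0 := by rw [hv, smul_zero]
  obtain ⟨T, hT⟩ : 𝔭.FG := IsNoetherian.noetherian 𝔭
  have hwit : ∀ r : {x // x ∈ T}, ∃ v : S, ((v : R) * (r : R)) • m = 0 := by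
    intro r
    exact (hmem r).mp (hT ▸ Ideal.subset_span r.2)
  choose w hw using hwit
  set u : S := ∏ r ∈ T.attach, w r with hu
  refine ⟨⟨𝔭, h𝔭prime⟩, isAssociatedPrime_iff.mpr ⟨h𝔭prime, (u : R) • m, ?_⟩, h𝔭le⟩
  apply le_antisymm
  · refine le_trans (le_of_eq hT.symm) (Ideal.span_le.mpr ?_)
    intro r hr
    rw [SetLike.mem_coe, Submodule.mem_colon_singleton, Submodule.mem_bot]
    have : (u : R) = (w ⟨r, hr⟩ : R) * ∏ x ∈ T.attach.erase ⟨r, hr⟩, (w x : R) := by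
      rw [hu, ← Submonoid.coe_finset_prod]
      rw [← Finset.mul_prod_erase T.attach w (Finset.mem_attach T ⟨r, hr⟩)]
      simp [Submonoid.coe_finset_prod]
    rw [smul_smul, this]
    have : r * ((w ⟨r, hr⟩ : R) * ∏ x ∈ T.attach.erase ⟨r, hr⟩, (w x : R))
        = (∏ x ∈ T.attach.erase ⟨r, hr⟩, (w x : R)) * ((w ⟨r, hr⟩ : R) * r) := by ring
    rw [this, mul_smul, hw ⟨r, hr⟩, smul_zero]
  · intro r hr
    rw [Submodule.mem_colon_singleton, Submodule.mem_bot, smul_smul] at hr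
    exact (hmem r).mpr ⟨u, by rwa [mul_comm]⟩

/-- If `M` localized at `𝔭` is finitely generated over `R_𝔭`, then there is a finitely
generated submodule `N ≤ M` with `𝔭 ∉ Supp (M/N)`. -/
lemma exists_fg_not_mem_support (𝔭 : PrimeSpectrum R)
    (h : Module.Finite (Localization 𝔭.asIdeal.primeCompl)
      (LocalizedModule 𝔭.asIdeal.primeCompl M)) :
    ∃ N : Submodule R M, N.FG ∧ 𝔭 ∉ Module.support R (M ⧸ N) := by
  classical
  set S := 𝔭.asIdeal.primeCompl with hS
  set f := LocalizedModule.mkLinearMap S M with hf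
  obtain ⟨T, hT⟩ := h.fg_top
  have hsurj := IsLocalizedModule.mk'_surjective S f
  choose g hg using fun t : {x // x ∈ T} => hsurj (t : LocalizedModule S M)
  set N : Submodule R M := Submodule.span R (Set.range fun t => (g t).1) with hN
  have hNfg : N.FG := Submodule.fg_span (Set.finite_range _)
  have htop : N.localized' (Localization S) S f = ⊤ := by
    rw [hN, Submodule.localized'_span]
    rw [eq_top_iff, ← hT, Submodule.span_le]
    intro t ht
    have h0 := hg ⟨t, ht⟩
    have h0' : IsLocalizedModule.mk' f (g ⟨t, ht⟩).1 (g ⟨t, ht⟩).2 = t := h0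
    rw [← h0']
    have h1 : IsLocalizedModule.mk' f (g ⟨t, ht⟩).1 (g ⟨t, ht⟩).2
        = IsLocalization.mk' (Localization S) (1 : R) (g ⟨t, ht⟩).2 • f (g ⟨t, ht⟩).1 := by
      rw [← IsLocalizedModule.mk'_one S f, IsLocalizedModule.mk'_smul_mk', one_smul, mul_one]
    rw [h1]
    exact Submodule.smul_mem _ _ (Submodule.subset_span ⟨(g ⟨t, ht⟩).1, ⟨⟨t, ht⟩, rfl⟩, rfl⟩)
  refine ⟨N, hNfg, ?_⟩
  rw [Module.notMem_support_iff']
  intro x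
  obtain ⟨m, rfl⟩ := Submodule.Quotient.mk_surjective N x
  have : f m ∈ N.localized' (Localization S) S f := htop ▸ Submodule.mem_top
  obtain ⟨m', hm', s, hs⟩ := this
  rw [← IsLocalizedModule.mk'_one S f, IsLocalizedModule.mk'_eq_mk'_iff] at hs
  obtain ⟨c, hc⟩ := hs
  have hc' : ((c * s : S) : R) • m = (c : R) • m' := by
    have h2 := hc
    simp only [Submonoid.smul_def, smul_smul, OneMemClass.coe_one, one_mul, mul_one] at h2
    rw [Submonoid.coe_mul]
    first
    | exact h2
    | exact h2.symm
  refine ⟨((c * s : S) : R), (c * s : S).2, ?_⟩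
  rw [← Submodule.Quotient.mk_smul, Submodule.Quotient.mk_eq_zero, hc']
  exact N.smul_mem _ hm'

end Helpers4p3


/-- **Lemma 4.3.** Suppose `Ass(M)_{≥n}` is nonempty and finite, `Ass(M/K)_{≥n}` is
finite for every finitely generated submodule `K` of `M`, and `M_𝔭` is finitely
generated over `R_𝔭` for every `𝔭 ∈ Ass(M)_{≥n}`.  Then there is a finitely generated
submodule `N` of `M` with `⋂_{𝔭 ∈ Ass(M)_{≥n}} 𝔭 ⊊ ⋂_{𝔭 ∈ Ass(M/N)_{≥n}} 𝔭`. -/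
theorem exists_fg_submodule_inter_lt (R : Type u) [CommRing R] [IsNoetherianRing R]
    (n : ℕ) (M : Type u) [AddCommGroup M] [Module R M]
    (h1 : (Paper.assn R n M).Nonempty) (h2 : (Paper.assn R n M).Finite)
    (h3 : ∀ K : Submodule R M, K.FG → (Paper.assn R n (M ⧸ K)).Finite)
    (h4 : ∀ 𝔭 ∈ Paper.assn R n M, Module.Finite (Paper.Loc R 𝔭) (Paper.locM R 𝔭 M)) :
    ∃ N : Submodule R M, N.FG ∧
      (⨅ 𝔭 ∈ Paper.assn R n M, 𝔭.asIdeal) <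
        ⨅ 𝔭 ∈ Paper.assn R n (M ⧸ N), 𝔭.asIdeal := by
  classical
  obtain ⟨𝔭, h𝔭ass, h𝔭dim⟩ := h1
  obtain ⟨N, hNfg, hNsupp⟩ := exists_fg_not_mem_support 𝔭 (h4 𝔭 ⟨h𝔭ass, h𝔭dim⟩)
  refine ⟨N, hNfg, lt_of_le_of_ne ?_ ?_⟩
  · refine le_iInf fun 𝔮 => le_iInf fun h𝔮 => ?_
    obtain ⟨h𝔮ass, h𝔮dim⟩ := h𝔮
    have h𝔮M : 𝔮 ∈ Module.support R M :=
      Module.support_subset_of_surjective N.mkQ (Submodule.mkQ_surjective N)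
        (mem_support_of_associated h𝔮ass)
    obtain ⟨𝔭', h𝔭'ass, h𝔭'le⟩ := exists_associated_le 𝔮 h𝔮M
    have hsurj : Function.Surjective (Ideal.Quotient.factor h𝔭'le) := by
      intro y
      obtain ⟨x, rfl⟩ := Ideal.Quotient.mk_surjective y
      exact ⟨Ideal.Quotient.mk _ x, Ideal.Quotient.factor_mk h𝔭'le x⟩
    have hdim' : (n : WithBot ℕ∞) ≤ Paper.dimQ R 𝔭' :=
      le_trans h𝔮dim (ringKrullDim_le_of_surjective _ hsurj)
    exact le_trans (iInf₂_le 𝔭' ⟨h𝔭'ass, hdim'⟩) h𝔭'le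
  · intro heq
    have hle : (⨅ 𝔮 ∈ Paper.assn R n (M ⧸ N), 𝔮.asIdeal) ≤ 𝔭.asIdeal :=
      heq ▸ (iInf₂_le 𝔭 ⟨h𝔭ass, h𝔭dim⟩ :
        (⨅ 𝔮 ∈ Paper.assn R n M, 𝔮.asIdeal) ≤ 𝔭.asIdeal)
    have hfin := h3 N hNfg
    have hconv : (⨅ 𝔮 ∈ Paper.assn R n (M ⧸ N), 𝔮.asIdeal)
        = hfin.toFinset.inf (fun 𝔮 => 𝔮.asIdeal) := by
      rw [Finset.inf_eq_iInf]
      exact iInf_congr fun 𝔮 =>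
        iInf_congr_Prop (Set.Finite.mem_toFinset hfin).symm (fun _ => rfl)
    rw [hconv] at hle
    obtain ⟨𝔮, h𝔮mem, h𝔮le⟩ := (Ideal.IsPrime.inf_le' 𝔭.2).mp hle
    rw [Set.Finite.mem_toFinset] at h𝔮mem
    exact hNsupp (mem_support_of_le h𝔮le (mem_support_of_associated h𝔮mem.1))
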